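/- Let a ∈ ℤ and b ∈ ℕ with b ≥ 1 be relatively prime. Then for all real x > 0, |B_{x,0}(a/b)| ≤ b/x, where B_{x,0}(t) = (1/x)·Σ_{1 ≤ k ≤ ⌊x⌋} β₀(kt) and β₀(t) = t - ⌊t⌋ - 1/2 for t ∉ ℤ, β₀(t) = 0 for t ∈ ℤ. -/

import Mathlib

noncomputable def beta0 (t : ℝ) : ℝ := if Int.fract t = 0 then 0 else t - ⌊t⌋ - 1/2

noncomputable def B0 (x : ℝ) (t : ℝ) : ℝ :=
  (1/x) * ∑ k ∈ Finset.Icc 1 ⌊x⌋₊, beta0 (k * t)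

/-!
`β₀` is odd and `1`-periodic, so `k ↦ β₀ (k a / b)` is `b`-periodic and its sum over a period
vanishes: the term at `k` cancels the one at `b - k`. A partial sum over `1 ≤ k ≤ ⌊x⌋` therefore
equals a sum of fewer than `b` terms, each of absolute value at most `1 / 2`.
-/

open Finset

theorem Function.Odd.sum_range_mul_eq_zero {R β : Type*} [Ring R] [AddCommGroup β]
    [IsAddTorsionFree β] {f : R → β} (hf : f.Odd) {n : ℕ} {t : R}
    (hper : Function.Periodic f (n * t)) : ∑ k ∈ range n, f (k * t) = 0 := by
  have hshift : ∑ k ∈ range n, f ((k + 1 : ℕ) * t) = ∑ k ∈ range n, f (k * t) := by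
    have h := sum_range_succ (fun k : ℕ => f (k * t)) n
    rwa [sum_range_succ', Nat.cast_zero, zero_mul, hf.map_zero, add_zero,
      show f (n * t) = 0 by simpa [hf.map_zero] using hper 0, add_zero] at h
  -- reflecting `k ↦ n - 1 - k` sends `(k + 1) * t` to `n * t - k * t`
  have hreflect : ∑ k ∈ range n, f ((k + 1 : ℕ) * t) = -∑ k ∈ range n, f (k * t) := by
    rw [← sum_range_reflect, ← sum_neg_distrib]
    refine sum_congr rfl fun k hk => ?_
    have hk : k < n := mem_range.mp hk
    have : ((n - 1 - k + 1 : ℕ) : R) * t = -(k * t) + n * t := by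
      rw [show n - 1 - k + 1 = n - k by omega, Nat.cast_sub hk.le]; noncomm_ring
    rw [this, hper, hf]
  rwa [hshift, eq_comm, neg_eq_self] at hreflect

theorem Function.Periodic.sum_range_eq_sum_range_mod {M : Type*} [AddCommMonoid M] {g : ℕ → M}
    {n : ℕ} (hper : Function.Periodic g n) (hsum : ∑ k ∈ range n, g k = 0) (N : ℕ) :
    ∑ k ∈ range N, g k = ∑ k ∈ range (N % n), g k := by
  suffices h : ∀ q r, ∑ k ∈ range (n * q + r), g k = ∑ k ∈ range r, g k by
    conv_lhs => rw [← Nat.div_add_mod N n]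
    exact h _ _
  intro q r
  induction q with
  | zero => simp
  | succ q ih =>
    rw [show n * (q + 1) + r = n + (n * q + r) by ring, sum_range_add, hsum, zero_add, ← ih]
    exact sum_congr rfl fun k _ => by rw [add_comm]; exact hper k

lemma beta0_eq_ite_fract (t : ℝ) : beta0 t = if Int.fract t = 0 then 0 else Int.fract t - 1/2 :=
  rfl

lemma abs_beta0_le (t : ℝ) : |beta0 t| ≤ 1/2 := by
  rw [beta0_eq_ite_fract]
  split
  · norm_num
  · rw [abs_le]
    constructor <;> linarith [Int.fract_nonneg t, Int.fract_lt_one t]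

lemma beta0_periodic : Function.Periodic beta0 1 := fun t => by
  simp only [beta0_eq_ite_fract, Int.fract_add_one]

lemma beta0_odd : beta0.Odd := fun t => by
  by_cases ht : Int.fract t = 0
  · simp [beta0_eq_ite_fract, ht, Int.fract_neg_eq_zero.mpr ht]
  · have hneg := Int.fract_neg ht
    have : Int.fract (-t) ≠ 0 := by rw [hneg]; linarith [Int.fract_lt_one t]
    rw [beta0_eq_ite_fract, beta0_eq_ite_fract, if_neg ht, if_neg this, hneg]
    ring

lemma abs_sum_range_beta0_le {n : ℕ} (hn : 0 < n) {t : ℝ} (hper : Function.Periodic beta0 (n * t))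
    (N : ℕ) : |∑ k ∈ range N, beta0 (k * t)| ≤ n / 2 := by
  have hperk : Function.Periodic (fun k : ℕ => beta0 (k * t)) n := fun k => by
    simp only [Nat.cast_add, add_mul, hper (k * t)]
  rw [hperk.sum_range_eq_sum_range_mod (beta0_odd.sum_range_mul_eq_zero hper)]
  calc |∑ k ∈ range (N % n), beta0 (k * t)|
      ≤ ∑ k ∈ range (N % n), |beta0 (k * t)| := abs_sum_le_sum_abs _ _
    _ ≤ (N % n : ℕ) * (1 / 2) := by
      simpa using sum_le_card_nsmul (range (N % n)) _ _ fun k _ => abs_beta0_le (k * t)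
    _ ≤ n / 2 := by
      have : ((N % n : ℕ) : ℝ) ≤ n := by exact_mod_cast (Nat.mod_lt N hn).le
      linarith

theorem stmt_4_general (a : ℤ) (b : ℕ) (hb : 1 ≤ b)
    (x : ℝ) (hx : 0 < x) :
    |B0 x ((a : ℝ) / b)| ≤ b / x := by
  have hper : Function.Periodic beta0 (b * ((a : ℝ) / b)) := by
    rw [mul_div_cancel₀ _ (by positivity)]
    simpa using beta0_periodic.int_mul a
  have hsum : ∑ k ∈ Icc 1 ⌊x⌋₊, beta0 (k * ((a : ℝ) / b))
      = ∑ k ∈ range (⌊x⌋₊ + 1), beta0 (k * ((a : ℝ) / b)) := by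
    rw [Nat.range_succ_eq_Icc_zero, ← insert_Icc_add_one_left_eq_Icc (Nat.zero_le _),
      sum_insert (by simp), Nat.cast_zero, zero_mul, beta0_odd.map_zero, zero_add, zero_add]
  have hS := abs_sum_range_beta0_le hb hper (⌊x⌋₊ + 1)
  rw [B0, abs_mul, abs_of_pos (one_div_pos.mpr hx), hsum, one_div_mul_eq_div]
  gcongr
  linarith [(Nat.cast_nonneg b : (0 : ℝ) ≤ b)]

theorem stmt_4 (a : ℤ) (b : ℕ) (hb : 1 ≤ b) (hab : Int.gcd a b = 1)
    (x : ℝ) (hx : 0 < x) :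
    |B0 x ((a : ℝ) / b)| ≤ b / x :=
  stmt_4_general a b hb x hx
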